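/- For every natural number n > 5, there exists a simple graph G on n vertices with det(G) > 4, and there exists a simple graph H on n vertices with det(H) < -4. -/

import Mathlib

/-!
The complete graph `Kₘ` has adjacency matrix `J - I`, so `det Kₘ = (-1)^(m+1) (m-1)`, and the
determinant is multiplicative over disjoint unions. Hence `Kₙ` has determinant of sign
`(-1)^(n+1)` and absolute value `n - 1 ≥ 5`, while `K₃ ⊔ Kₙ₋₃` has determinant `(-1)^n · 2(n-4)`,
which exceeds `4` in absolute value once `n ≥ 7`. For `n = 6` the graph `K₃ ⊔ K₃` only reaches
`4`; instead, a `K₃` and a `K₄` sharing one vertex has determinant `7`.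
-/

open Matrix

namespace SimpleGraph

variable {R V W : Type*} [CommRing R] [Fintype V] [Fintype W] [DecidableEq V] [DecidableEq W]

theorem det_adjMatrix_top :
    ((⊤ : SimpleGraph V).adjMatrix R).det =
      (-1) ^ (Fintype.card V + 1) * ((Fintype.card V : R) - 1) := by
  have hJ : (⊤ : SimpleGraph V).adjMatrix R =
      -((1 : Matrix V V R) +
        replicateCol Unit (fun _ : V => (-1 : R)) * replicateRow Unit (fun _ : V => (1 : R))) := by
    ext i j
    by_cases hij : i = j <;> simp [hij, Matrix.mul_apply]
  rw [hJ, det_neg, det_one_add_replicateCol_mul_replicateRow]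
  simp [dotProduct, pow_succ]
  ring

theorem det_adjMatrix_sum (G : SimpleGraph V) (H : SimpleGraph W) [DecidableRel G.Adj]
    [DecidableRel H.Adj] [DecidableRel (G ⊕g H).Adj] :
    ((G ⊕g H).adjMatrix R).det = (G.adjMatrix R).det * (H.adjMatrix R).det := by
  have hblock : (G ⊕g H).adjMatrix R = fromBlocks (G.adjMatrix R) 0 0 (H.adjMatrix R) := by
    ext (i | i) (j | j) <;> simp
  rw [hblock, det_fromBlocks_zero₂₁]

theorem Iso.det_adjMatrix_eq {G : SimpleGraph V} {H : SimpleGraph W} [DecidableRel G.Adj]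
    [DecidableRel H.Adj] (f : G ≃g H) : (G.adjMatrix R).det = (H.adjMatrix R).det := by
  rw [← f.reindex_adjMatrix R, det_reindex_self]

open scoped Classical in
theorem exists_det_adjMatrix_eq_of_card_eq (G : SimpleGraph V) [DecidableRel G.Adj] {n : ℕ}
    (hc : Fintype.card V = n) :
    ∃ G' : SimpleGraph (Fin n), (G'.adjMatrix R).det = (G.adjMatrix R).det :=
  ⟨G.overFin hc, (G.overFinIso hc).det_adjMatrix_eq.symm⟩

def cliqueThreeFourGlued : SimpleGraph (Fin 6) :=
  fromRel fun i j => (i ≤ 2 ∧ j ≤ 2) ∨ (2 ≤ i ∧ 2 ≤ j)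

theorem det_adjMatrix_cliqueThreeFourGlued [DecidableRel cliqueThreeFourGlued.Adj] :
    (cliqueThreeFourGlued.adjMatrix ℤ).det = 7 := by
  have hA : cliqueThreeFourGlued.adjMatrix ℤ =
      !![0, 1, 1, 0, 0, 0;
         1, 0, 1, 0, 0, 0;
         1, 1, 0, 1, 1, 1;
         0, 0, 1, 0, 1, 1;
         0, 0, 1, 1, 0, 1;
         0, 0, 1, 1, 1, 0] := by
    ext i j
    rw [adjMatrix_apply]
    fin_cases i <;> fin_cases j <;> simp [cliqueThreeFourGlued]
  rw [hA]
  simp [det_succ_row_zero, Fin.sum_univ_succ, Fin.succAbove]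

open scoped Classical in
theorem exists_neg_one_pow_mul_det_adjMatrix_gt_four {n : ℕ} (hn : 6 ≤ n) :
    ∃ G : SimpleGraph (Fin n), 4 < (-1) ^ n * (G.adjMatrix ℤ).det := by
  obtain rfl | hn7 := hn.eq_or_lt
  · exact ⟨cliqueThreeFourGlued, by rw [det_adjMatrix_cliqueThreeFourGlued]; norm_num⟩
  obtain ⟨m, rfl⟩ : ∃ m, n = 3 + m := ⟨n - 3, by omega⟩
  let K₃Kₘ := (⊤ : SimpleGraph (Fin 3)) ⊕g (⊤ : SimpleGraph (Fin m))
  obtain ⟨G, hG⟩ := exists_det_adjMatrix_eq_of_card_eq (R := ℤ) K₃Kₘ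
    (by simp : Fintype.card (Fin 3 ⊕ Fin m) = 3 + m)
  have hsign : (-1 : ℤ) ^ (3 + m) * (-1) ^ (m + 1) = 1 := by
    rw [← pow_add, Even.neg_one_pow ⟨m + 2, by ring⟩]
  have hdet : (-1) ^ (3 + m) * (K₃Kₘ.adjMatrix ℤ).det = 2 * (m - 1) := by
    rw [det_adjMatrix_sum, det_adjMatrix_top, det_adjMatrix_top]
    simp only [Fintype.card_fin]
    linear_combination (2 * (m - 1) : ℤ) * hsign
  have hm : (4 : ℤ) ≤ m := by exact_mod_cast (by omega : 4 ≤ m)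
  exact ⟨G, by rw [hG, hdet]; linarith⟩

open scoped Classical in
theorem exists_neg_one_pow_succ_mul_det_adjMatrix_gt_four {n : ℕ} (hn : 6 ≤ n) :
    ∃ G : SimpleGraph (Fin n), 4 < (-1) ^ (n + 1) * (G.adjMatrix ℤ).det := by
  obtain ⟨G, hG⟩ := exists_det_adjMatrix_eq_of_card_eq (R := ℤ) (⊤ : SimpleGraph (Fin n))
    (Fintype.card_fin n)
  refine ⟨G, ?_⟩
  rw [hG, det_adjMatrix_top, Fintype.card_fin, ← mul_assoc, ← pow_add, Even.neg_one_pow ⟨_, rfl⟩,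
    one_mul]
  have hn' : (6 : ℤ) ≤ n := by exact_mod_cast hn
  linarith

end SimpleGraph

open scoped Classical in
theorem exists_det_gt_four_and_lt_neg_four (n : ℕ) (hn : 5 < n) :
    (∃ G : SimpleGraph (Fin n), 4 < (G.adjMatrix ℤ).det) ∧
    (∃ H : SimpleGraph (Fin n), (H.adjMatrix ℤ).det < -4) := by
  obtain ⟨G, hG⟩ := SimpleGraph.exists_neg_one_pow_mul_det_adjMatrix_gt_four hn
  obtain ⟨K, hK⟩ := SimpleGraph.exists_neg_one_pow_succ_mul_det_adjMatrix_gt_four hn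
  rcases n.even_or_odd with hev | hodd
  · rw [hev.neg_one_pow, one_mul] at hG
    rw [hev.add_one.neg_one_pow, neg_one_mul] at hK
    exact ⟨⟨G, hG⟩, ⟨K, by linarith⟩⟩
  · rw [hodd.neg_one_pow, neg_one_mul] at hG
    rw [hodd.add_one.neg_one_pow, one_mul] at hK
    exact ⟨⟨K, hK⟩, ⟨G, by linarith⟩⟩
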